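/- arXiv:2605.22493 — 4 statements merged into one kernel-verified Lean document; each statement's English description precedes it below -/
import Mathlib

section
/- Let μ₀ denote the standard Gaussian measure N(0,1) on ℝ, let A be a metric space equipped with its Borel σ-algebra, and let G : ℝ → A be Lipschitz with constant L > 0. Let C₁, …, C_K be measurable subsets of A that are pairwise Δ-separated, i.e. dist(C_k, C_{k'}) ≥ Δ for all k ≠ k', where Δ > 0. Let τ ∈ (0,1) and let r > 0 satisfy μ₀({u : r ≤ |u|}) ≤ τ. Then the number of indices k ∈ {1,…,K} such that the pushforward measure (μ₀.map G)(C_k) > τ is at most 1 + ⌊2·r·L/Δ⌋. -/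
open MeasureTheory ProbabilityTheory
open scoped ENNReal NNReal Classical

lemma abs_sub_lt_one_of_floor_eq {x y : ℝ} (hx : 0 ≤ x) (hy : 0 ≤ y)
    (h : ⌊x⌋₊ = ⌊y⌋₊) : |x - y| < 1 := by
  rw [abs_sub_lt_iff]
  have h1 := Nat.lt_floor_add_one x
  have h2 := Nat.lt_floor_add_one y
  have h3 := Nat.floor_le hx
  have h4 := Nat.floor_le hy
  rw [h] at h1 h3
  constructor <;> linarith

/-- **Mode-representation bound for Lipschitz generators** (Proposition 3).
Let `μ₀ = N(0,1)` on `ℝ`, `G : ℝ → A` Lipschitz with constant `L > 0`, and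
`C 1, …, C K` pairwise `Δ`-separated measurable sets. If `τ ∈ (0,1)` and `r > 0`
is such that the Gaussian tail mass `μ₀ {u : r ≤ |u|} ≤ τ`, then the number of
indices `k` with `(μ₀.map G) (C k) > τ` is at most `1 + ⌊2 r L / Δ⌋`. -/
theorem mode_representation_bound
    {A : Type*} [MetricSpace A] [MeasurableSpace A] [BorelSpace A]
    (G : ℝ → A) (L : ℝ≥0) (hL : 0 < L) (hG : LipschitzWith L G)
    (K : ℕ) (C : Fin K → Set A) (hCmeas : ∀ k, MeasurableSet (C k))
    (Δ : ℝ) (hΔ : 0 < Δ)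
    (hsep : ∀ k k' : Fin K, k ≠ k' → ∀ a ∈ C k, ∀ a' ∈ C k', Δ ≤ dist a a')
    (τ r : ℝ) (hτ : τ ∈ Set.Ioo (0 : ℝ) 1) (hr : 0 < r)
    (htail : gaussianReal 0 1 {u : ℝ | r ≤ |u|} ≤ ENNReal.ofReal τ) :
    (Finset.univ.filter
        (fun k : Fin K => ENNReal.ofReal τ < (gaussianReal 0 1).map G (C k))).card
      ≤ 1 + ⌊2 * r * (L : ℝ) / Δ⌋₊ := by
  have hGm : Measurable G := hG.continuous.measurable
  have hL' : (0 : ℝ) < L := hL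
  set μ := gaussianReal 0 1 with hμ
  set S := Finset.univ.filter
      (fun k : Fin K => ENNReal.ofReal τ < μ.map G (C k)) with hSdef
  have hpt : ∀ k ∈ S, ∃ u : ℝ, |u| ≤ r ∧ G u ∈ C k := by
    intro k hk
    rw [hSdef, Finset.mem_filter] at hk
    have hmap : μ.map G (C k) = μ (G ⁻¹' C k) := Measure.map_apply hGm (hCmeas k)
    by_contra h
    push_neg at h
    have hsub : G ⁻¹' C k ⊆ {u : ℝ | r ≤ |u|} := by
      intro v hv
      by_contra h'
      exact h v (le_of_lt (not_le.mp h')) hv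
    have hle : μ.map G (C k) ≤ ENNReal.ofReal τ := by
      rw [hmap]; exact (measure_mono hsub).trans htail
    exact absurd hk.2 (not_lt.mpr hle)
  choose u hu hC using hpt
  have key : S.card ≤ (Finset.range (1 + ⌊2 * r * (L : ℝ) / Δ⌋₊)).card := by
    apply Finset.card_le_card_of_injOn
      (fun k => if hk : k ∈ S then ⌊(u k hk + r) * L / Δ⌋₊ else 0)
    · intro k hk
      simp only [dif_pos hk, Finset.mem_range]
      have h1 : (u k hk + r) * L / Δ ≤ 2 * r * L / Δ := by
        have := (abs_le.mp (hu k hk)).2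
        gcongr
        linarith
      have := Nat.floor_le_floor h1
      rw [Finset.coe_range, Set.mem_Iio, dif_pos (Finset.mem_coe.mp hk)]
      omega
    · intro k hk k' hk' heq
      by_contra hne
      beta_reduce at heq
      rw [dif_pos (Finset.mem_coe.mp hk), dif_pos (Finset.mem_coe.mp hk')] at heq
      have hd : Δ ≤ |u k hk - u k' hk'| * (L : ℝ) := by
        have h1 := hsep k k' hne _ (hC k hk) _ (hC k' hk')
        have h2 := hG.dist_le_mul (u k hk) (u k' hk')
        rw [Real.dist_eq] at h2
        nlinarith
      have h0 : 0 ≤ u k hk + r := by linarith [(abs_le.mp (hu k hk)).1]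
      have h0' : 0 ≤ u k' hk' + r := by linarith [(abs_le.mp (hu k' hk')).1]
      have hx : 0 ≤ (u k hk + r) * L / Δ :=
        div_nonneg (mul_nonneg h0 L.coe_nonneg) hΔ.le
      have hy : 0 ≤ (u k' hk' + r) * L / Δ :=
        div_nonneg (mul_nonneg h0' L.coe_nonneg) hΔ.le
      have hxy : (1 : ℝ) ≤ |(u k hk + r) * L / Δ - (u k' hk' + r) * L / Δ| := by
        have he : (u k hk + r) * L / Δ - (u k' hk' + r) * L / Δ
            = (u k hk - u k' hk') * L / Δ := by ring
        rw [he, abs_div, abs_mul, abs_of_pos hΔ,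
          abs_of_nonneg (L.coe_nonneg), le_div_iff₀ hΔ, one_mul]
        linarith
      linarith [abs_sub_lt_one_of_floor_eq hx hy heq]
  simpa [Finset.card_range] using key
end

section
/- (Posterior–prior KL decomposition.) Let 𝒜 and 𝒵 be measurable spaces, let ν be a probability measure on 𝒜, let κ be a Markov kernel from 𝒜 to 𝒵 (a measurable family a ↦ κ(a) of probability measures on 𝒵), and let p be a probability measure on 𝒵. Let q̄ = ν.bind κ be the mixture measure, q̄(B) = ∫ κ(a)(B) dν(a). Assume that κ(a) ≪ p for ν-almost every a, and that ∫ KL(κ(a) ‖ p) dν(a) < ∞. Then ∫ KL(κ(a) ‖ p) dν(a) = ∫ KL(κ(a) ‖ q̄) dν(a) + KL(q̄ ‖ p). -/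
open MeasureTheory ProbabilityTheory
open scoped ENNReal Classical

/-- Kullback–Leibler divergence: `KL(μ ‖ ρ) = ∫ log (dμ/dρ) dμ` when `μ ≪ ρ` and
the log-likelihood ratio is `μ`-integrable, and `+∞` otherwise. -/
noncomputable def KLdiv {𝒵 : Type*} [MeasurableSpace 𝒵] (μ ρ : Measure 𝒵) : ℝ≥0∞ :=
  if μ ≪ ρ ∧ Integrable (llr μ ρ) μ then ENNReal.ofReal (∫ z, llr μ ρ z ∂μ) else ⊤

section Aux

variable {𝒵 : Type*} [MeasurableSpace 𝒵] {μ ρ : Measure 𝒵}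

/-- Pointwise bounds on the log-likelihood ratio. -/
lemma llr_ae_bounds [SigmaFinite μ] [SigmaFinite ρ] (h : μ ≪ ρ) :
    ∀ᵐ z ∂μ, ENNReal.ofReal (-llr μ ρ z) ≤ ρ.rnDeriv μ z ∧
      1 - (ρ.rnDeriv μ z).toReal ≤ llr μ ρ z := by
  filter_upwards [Measure.rnDeriv_pos h, h.ae_le (Measure.rnDeriv_ne_top μ ρ),
    Measure.inv_rnDeriv h] with z hpos hne hinv
  have ht : 0 < (μ.rnDeriv ρ z).toReal := ENNReal.toReal_pos hpos.ne' hne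
  have hlog : Real.log (μ.rnDeriv ρ z).toReal⁻¹ ≤ (μ.rnDeriv ρ z).toReal⁻¹ - 1 :=
    Real.log_le_sub_one_of_pos (inv_pos.mpr ht)
  rw [Real.log_inv] at hlog
  have hllr : llr μ ρ z = Real.log (μ.rnDeriv ρ z).toReal := rfl
  have hinv' : (μ.rnDeriv ρ z)⁻¹ = ρ.rnDeriv μ z := by
    simpa [Pi.inv_apply] using hinv
  have htoReal : (ρ.rnDeriv μ z).toReal = (μ.rnDeriv ρ z).toReal⁻¹ := by
    rw [← hinv', ENNReal.toReal_inv]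
  constructor
  · calc ENNReal.ofReal (-llr μ ρ z) ≤ ENNReal.ofReal ((μ.rnDeriv ρ z).toReal⁻¹) := by
          apply ENNReal.ofReal_le_ofReal
          rw [hllr]; linarith
      _ = (μ.rnDeriv ρ z)⁻¹ := by
          rw [← ENNReal.toReal_inv, ENNReal.ofReal_toReal (by simp [hpos.ne'])]
      _ = ρ.rnDeriv μ z := hinv'
  · rw [htoReal, hllr]; linarith

/-- The negative part of the log-likelihood ratio has `μ`-lintegral at most `1`. -/
lemma lintegral_ofReal_neg_llr_le [IsProbabilityMeasure μ] [IsProbabilityMeasure ρ]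
    (h : μ ≪ ρ) :
    ∫⁻ z, ENNReal.ofReal (-llr μ ρ z) ∂μ ≤ 1 := by
  calc ∫⁻ z, ENNReal.ofReal (-llr μ ρ z) ∂μ ≤ ∫⁻ z, ρ.rnDeriv μ z ∂μ :=
        lintegral_mono_ae ((llr_ae_bounds h).mono fun z hz => hz.1)
    _ ≤ ρ Set.univ := Measure.lintegral_rnDeriv_le
    _ = 1 := measure_univ

/-- Jensen-type nonnegativity of the KL integrand. -/
lemma integral_llr_nonneg' [IsProbabilityMeasure μ] [IsProbabilityMeasure ρ] (h : μ ≪ ρ)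
    (hi : Integrable (llr μ ρ) μ) : 0 ≤ ∫ z, llr μ ρ z ∂μ := by
  have hint : Integrable (fun z => (ρ.rnDeriv μ z).toReal) μ :=
    Measure.integrable_toReal_rnDeriv
  have hle : ∫ z, (1 - (ρ.rnDeriv μ z).toReal) ∂μ ≤ ∫ z, llr μ ρ z ∂μ :=
    integral_mono_ae ((integrable_const (1 : ℝ)).sub hint) hi
      ((llr_ae_bounds h).mono fun z hz => hz.2)
  have h1 : ∫ z, (ρ.rnDeriv μ z).toReal ∂μ ≤ 1 := by
    rw [integral_toReal (Measure.measurable_rnDeriv ρ μ).aemeasurable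
      (Measure.rnDeriv_lt_top ρ μ)]
    have h2 : ∫⁻ z, ρ.rnDeriv μ z ∂μ ≤ 1 := by
      calc ∫⁻ z, ρ.rnDeriv μ z ∂μ ≤ ρ Set.univ := Measure.lintegral_rnDeriv_le
        _ = 1 := measure_univ
    calc (∫⁻ z, ρ.rnDeriv μ z ∂μ).toReal ≤ (1 : ℝ≥0∞).toReal :=
          ENNReal.toReal_mono (by simp) h2
      _ = 1 := by simp
  rw [integral_sub (integrable_const _) hint, integral_const] at hle
  simp only [probReal_univ, ENNReal.toReal_one, smul_eq_mul, one_mul, mul_one] at hle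
  linarith

/-- `KLdiv μ ρ + N = P` where `P` and `N` are the lintegrals of the positive and
negative parts of the log-likelihood ratio. -/
lemma KLdiv_add_neg_part [IsProbabilityMeasure μ] [IsProbabilityMeasure ρ] (h : μ ≪ ρ) :
    KLdiv μ ρ + ∫⁻ z, ENNReal.ofReal (-llr μ ρ z) ∂μ
      = ∫⁻ z, ENNReal.ofReal (llr μ ρ z) ∂μ := by
  set N := ∫⁻ z, ENNReal.ofReal (-llr μ ρ z) ∂μ with hN
  set P := ∫⁻ z, ENNReal.ofReal (llr μ ρ z) ∂μ with hP
  have hm : Measurable fun z => ENNReal.ofReal (llr μ ρ z) :=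
    (measurable_llr μ ρ).ennreal_ofReal
  have hN_le : N ≤ 1 := lintegral_ofReal_neg_llr_le h
  have hN_ne : N ≠ ⊤ := (hN_le.trans_lt (by simp)).ne
  have hPN : ∫⁻ z, ‖llr μ ρ z‖ₑ ∂μ = P + N := by
    rw [hP, hN, ← lintegral_add_left hm]
    refine lintegral_congr fun z => ?_
    rcases le_total 0 (llr μ ρ z) with hz | hz
    · rw [ENNReal.ofReal_of_nonpos (neg_nonpos.mpr hz), add_zero,
        ← ofReal_norm, Real.norm_eq_abs, abs_of_nonneg hz]
    · rw [ENNReal.ofReal_of_nonpos hz, zero_add,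
        ← ofReal_norm, Real.norm_eq_abs, abs_of_nonpos hz]
  by_cases hi : Integrable (llr μ ρ) μ
  · have hfin : P + N ≠ ⊤ := by
      rw [← hPN]
      exact hi.2.ne
    have hP_ne : P ≠ ⊤ := fun hh => hfin (by simp [hh])
    have heq : ∫ z, llr μ ρ z ∂μ = P.toReal - N.toReal := by
      rw [integral_eq_lintegral_pos_part_sub_lintegral_neg_part hi]
    have hnonneg : 0 ≤ ∫ z, llr μ ρ z ∂μ := integral_llr_nonneg' h hi
    have hNP : N ≤ P := by
      rw [heq] at hnonneg
      have : N.toReal ≤ P.toReal := by linarith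
      exact (ENNReal.toReal_le_toReal hN_ne hP_ne).mp this
    rw [KLdiv, if_pos ⟨h, hi⟩, heq, ENNReal.ofReal_sub _ ENNReal.toReal_nonneg,
      ENNReal.ofReal_toReal hP_ne, ENNReal.ofReal_toReal hN_ne,
      tsub_add_cancel_of_le hNP]
  · have hP_top : P = ⊤ := by
      by_contra hPne
      apply hi
      refine ⟨(measurable_llr μ ρ).aestronglyMeasurable, ?_⟩
      rw [HasFiniteIntegral, hPN]
      exact lt_top_iff_ne_top.mpr (ENNReal.add_ne_top.mpr ⟨hPne, hN_ne⟩)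
    rw [KLdiv, if_neg (fun hh => hi hh.2), hP_top, top_add]

/-- Chain rule for log-likelihood ratios. -/
lemma llr_chain {q : Measure 𝒵} [SigmaFinite μ] [SigmaFinite q] [SigmaFinite ρ]
    (h1 : μ ≪ ρ) (h2 : μ ≪ q) (h3 : q ≪ ρ) :
    ∀ᵐ z ∂μ, llr μ ρ z = llr μ q z + llr q ρ z := by
  filter_upwards [h1.ae_le (Measure.rnDeriv_mul_rnDeriv h2), Measure.rnDeriv_pos h2,
    h2.ae_le (Measure.rnDeriv_ne_top μ q), h2.ae_le (Measure.rnDeriv_pos h3),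
    h1.ae_le (Measure.rnDeriv_ne_top q ρ)] with z hz hu0 hut hv0 hvt
  have hu : (μ.rnDeriv q z).toReal ≠ 0 := ENNReal.toReal_ne_zero.mpr ⟨hu0.ne', hut⟩
  have hv : (q.rnDeriv ρ z).toReal ≠ 0 := ENNReal.toReal_ne_zero.mpr ⟨hv0.ne', hvt⟩
  have : llr μ ρ z = Real.log (μ.rnDeriv ρ z).toReal := rfl
  rw [this, ← hz, Pi.mul_apply, ENNReal.toReal_mul, Real.log_mul hu hv]
  rfl

/-- Triangle identity for `ENNReal.ofReal` of positive/negative parts. -/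
lemma ofReal_tri (u v : ℝ) :
    ENNReal.ofReal (u + v) + ENNReal.ofReal (-u) + ENNReal.ofReal (-v)
      = ENNReal.ofReal u + ENNReal.ofReal v + ENNReal.ofReal (-(u + v)) := by
  have hmax : ∀ x : ℝ, ENNReal.ofReal x = ENNReal.ofReal ((x + |x|) / 2) := by
    intro x
    rcases le_total 0 x with hx | hx
    · rw [abs_of_nonneg hx]; ring_nf
    · rw [abs_of_nonpos hx, ENNReal.ofReal_of_nonpos hx]
      simp
  have habs : ∀ x : ℝ, 0 ≤ (x + |x|) / 2 := by
    intro x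
    have h1 := neg_abs_le x
    linarith
  have hsum : ∀ x y z : ℝ, 0 ≤ x → 0 ≤ y → 0 ≤ z →
      ENNReal.ofReal x + ENNReal.ofReal y + ENNReal.ofReal z
        = ENNReal.ofReal (x + y + z) := by
    intro x y z hx hy hz
    rw [← ENNReal.ofReal_add hx hy, ← ENNReal.ofReal_add (by linarith) hz]
  rw [hmax (u + v), hmax (-u), hmax (-v), hmax u, hmax v, hmax (-(u + v))]
  rw [hsum _ _ _ (habs _) (habs _) (habs _), hsum _ _ _ (habs _) (habs _) (habs _)]
  congr 1
  rw [abs_neg, abs_neg, abs_neg]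
  ring

end Aux

/-- **Posterior–prior KL decomposition** (Hoffman–Johnson): for a probability
measure `ν` on `𝒜`, a Markov kernel `κ` from `𝒜` to `𝒵`, and a probability
measure `p` on `𝒵`, letting `q̄ = ν.bind κ`, if `κ a ≪ p` for `ν`-a.e. `a` and
`∫ KL(κ a ‖ p) dν < ∞`, then
`∫ KL(κ a ‖ p) dν = ∫ KL(κ a ‖ q̄) dν + KL(q̄ ‖ p)`. -/
theorem posterior_prior_kl_decomposition
    {𝒜 𝒵 : Type*} [MeasurableSpace 𝒜] [MeasurableSpace 𝒵]
    (ν : Measure 𝒜) [IsProbabilityMeasure ν]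
    (κ : Kernel 𝒜 𝒵) [IsMarkovKernel κ]
    (p : Measure 𝒵) [IsProbabilityMeasure p]
    (hac : ∀ᵐ a ∂ν, κ a ≪ p)
    (hfin : ∫⁻ a, KLdiv (κ a) p ∂ν ≠ ⊤) :
    ∫⁻ a, KLdiv (κ a) p ∂ν
      = (∫⁻ a, KLdiv (κ a) (ν.bind κ) ∂ν) + KLdiv (ν.bind κ) p := by
  have hκm : Measurable fun a => κ a := κ.measurable
  set q : Measure 𝒵 := ν.bind κ with hqdef
  haveI hqP : IsProbabilityMeasure q := by
    constructor
    rw [hqdef, Measure.bind_apply MeasurableSet.univ hκm.aemeasurable]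
    simp
  have hq_ac : q ≪ p := by
    refine Measure.AbsolutelyContinuous.mk fun s hs hps => ?_
    rw [hqdef, Measure.bind_apply hs hκm.aemeasurable]
    have : ∀ᵐ a ∂ν, κ a s = (0 : ℝ≥0∞) := by
      filter_upwards [hac] with a ha using ha hps
    rw [lintegral_congr_ae this, lintegral_zero]
  -- the mixture-null set where the density of `q` w.r.t. `p` vanishes
  have hg : Measurable (q.rnDeriv p) := Measure.measurable_rnDeriv q p
  have hS : MeasurableSet {z | q.rnDeriv p z = 0} := hg (measurableSet_singleton 0)
  have hqS : q {z | q.rnDeriv p z = 0} = 0 := by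
    rw [← Measure.setLIntegral_rnDeriv hq_ac]
    rw [setLIntegral_congr_fun hS (fun z hz => hz)]
    simp
  have hκS : ∀ᵐ a ∂ν, κ a {z | q.rnDeriv p z = 0} = 0 := by
    have hb : ∫⁻ a, κ a {z | q.rnDeriv p z = 0} ∂ν = 0 := by
      rw [← Measure.bind_apply hS hκm.aemeasurable, ← hqdef, hqS]
    exact (lintegral_eq_zero_iff (κ.measurable_coe hS)).mp hb
  -- a.e. absolute continuity w.r.t. the mixture
  have hacq : ∀ᵐ a ∂ν, κ a ≪ q := by
    filter_upwards [hac, hκS] with a ha h0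
    refine Measure.AbsolutelyContinuous.mk fun s hs hqs => ?_
    have hps : p ({z | q.rnDeriv p z ≠ 0} ∩ s) = 0 := by
      have h1 : ∫⁻ z in s, q.rnDeriv p z ∂p = 0 := by
        rw [Measure.setLIntegral_rnDeriv hq_ac, hqs]
      have h2 : q.rnDeriv p =ᵐ[p.restrict s] 0 := (lintegral_eq_zero_iff hg).mp h1
      have h3 := ae_iff.mp h2
      simp only [Pi.zero_apply] at h3
      have h3' : (p.restrict s) ({z | q.rnDeriv p z = 0}ᶜ) = 0 := h3
      rw [Measure.restrict_apply hS.compl] at h3'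
      exact h3'
    have hsub : s ⊆ ({z | q.rnDeriv p z ≠ 0} ∩ s) ∪ {z | q.rnDeriv p z = 0} := by
      intro z hz
      by_cases h : q.rnDeriv p z = 0
      · exact Or.inr h
      · exact Or.inl ⟨h, hz⟩
    refine le_antisymm ?_ zero_le
    calc κ a s ≤ κ a (({z | q.rnDeriv p z ≠ 0} ∩ s) ∪ {z | q.rnDeriv p z = 0}) :=
          measure_mono hsub
      _ ≤ κ a ({z | q.rnDeriv p z ≠ 0} ∩ s) + κ a {z | q.rnDeriv p z = 0} :=
          measure_union_le _ _
      _ = 0 := by rw [ha hps, h0, add_zero]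
  -- positive and negative parts of `llr q p` integrated against the kernel
  have hvm : Measurable (llr q p) := measurable_llr q p
  set Pv : 𝒜 → ℝ≥0∞ := fun a => ∫⁻ z, ENNReal.ofReal (llr q p z) ∂κ a with hPvdef
  set Nv : 𝒜 → ℝ≥0∞ := fun a => ∫⁻ z, ENNReal.ofReal (-llr q p z) ∂κ a with hNvdef
  have hPvm : Measurable Pv :=
    (Measure.measurable_lintegral (hvm.ennreal_ofReal)).comp hκm
  have hNvm : Measurable Nv :=
    (Measure.measurable_lintegral (hvm.neg.ennreal_ofReal)).comp hκm
  have hPvint : ∫⁻ a, Pv a ∂ν = ∫⁻ z, ENNReal.ofReal (llr q p z) ∂q :=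
    (Measure.lintegral_bind hκm.aemeasurable (hvm.ennreal_ofReal).aemeasurable).symm
  have hNvint : ∫⁻ a, Nv a ∂ν = ∫⁻ z, ENNReal.ofReal (-llr q p z) ∂q :=
    (Measure.lintegral_bind hκm.aemeasurable (hvm.neg.ennreal_ofReal).aemeasurable).symm
  -- the key pointwise (in `a`) identity
  have hkey : ∀ᵐ a ∂ν, KLdiv (κ a) p + Nv a = KLdiv (κ a) q + Pv a := by
    filter_upwards [hac, hacq] with a h1 h2
    have hchain : ∀ᵐ z ∂κ a, llr (κ a) p z = llr (κ a) q z + llr q p z :=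
      llr_chain h1 h2 hq_ac
    have mwp : Measurable fun z => ENNReal.ofReal (llr (κ a) p z) :=
      (measurable_llr _ _).ennreal_ofReal
    have mwn : Measurable fun z => ENNReal.ofReal (-llr (κ a) p z) :=
      (measurable_llr _ _).neg.ennreal_ofReal
    have mup : Measurable fun z => ENNReal.ofReal (llr (κ a) q z) :=
      (measurable_llr _ _).ennreal_ofReal
    have mun : Measurable fun z => ENNReal.ofReal (-llr (κ a) q z) :=
      (measurable_llr _ _).neg.ennreal_ofReal
    set Pw := ∫⁻ z, ENNReal.ofReal (llr (κ a) p z) ∂κ a with hPwdef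
    set Nw := ∫⁻ z, ENNReal.ofReal (-llr (κ a) p z) ∂κ a with hNwdef
    set Pu := ∫⁻ z, ENNReal.ofReal (llr (κ a) q z) ∂κ a with hPudef
    set Nu := ∫⁻ z, ENNReal.ofReal (-llr (κ a) q z) ∂κ a with hNudef
    have hstar : Pw + Nu + Nv a = Pu + Pv a + Nw := by
      have lhs : Pw + Nu + Nv a
          = ∫⁻ z, (ENNReal.ofReal (llr (κ a) p z) + ENNReal.ofReal (-llr (κ a) q z)
              + ENNReal.ofReal (-llr q p z)) ∂κ a := by
        rw [lintegral_add_left (f := fun z => ENNReal.ofReal (llr (κ a) p z) + ENNReal.ofReal (-llr (κ a) q z)) (mwp.add mun), lintegral_add_left mwp]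
      have rhs : Pu + Pv a + Nw
          = ∫⁻ z, (ENNReal.ofReal (llr (κ a) q z) + ENNReal.ofReal (llr q p z)
              + ENNReal.ofReal (-llr (κ a) p z)) ∂κ a := by
        rw [lintegral_add_left (f := fun z => ENNReal.ofReal (llr (κ a) q z) + ENNReal.ofReal (llr q p z)) (mup.add (hvm.ennreal_ofReal)),
          lintegral_add_left mup]
      rw [lhs, rhs]
      refine lintegral_congr_ae ?_
      filter_upwards [hchain] with z hz
      rw [hz]
      exact ofReal_tri _ _
    have e1 : KLdiv (κ a) p + Nw = Pw := KLdiv_add_neg_part h1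
    have e2 : KLdiv (κ a) q + Nu = Pu := KLdiv_add_neg_part h2
    have hNw_ne : Nw ≠ ⊤ := ((lintegral_ofReal_neg_llr_le h1).trans_lt (by simp)).ne
    have hNu_ne : Nu ≠ ⊤ := ((lintegral_ofReal_neg_llr_le h2).trans_lt (by simp)).ne
    have hcalc : (KLdiv (κ a) p + Nv a) + (Nw + Nu)
        = (KLdiv (κ a) q + Pv a) + (Nw + Nu) := by
      calc (KLdiv (κ a) p + Nv a) + (Nw + Nu)
          = (KLdiv (κ a) p + Nw) + Nu + Nv a := by ring
        _ = Pw + Nu + Nv a := by rw [e1]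
        _ = Pu + Pv a + Nw := hstar
        _ = (KLdiv (κ a) q + Nu) + Pv a + Nw := by rw [e2]
        _ = (KLdiv (κ a) q + Pv a) + (Nw + Nu) := by ring
    exact WithTop.add_right_cancel (ENNReal.add_ne_top.mpr ⟨hNw_ne, hNu_ne⟩) hcalc
  -- integrate the key identity
  set Pq := ∫⁻ z, ENNReal.ofReal (llr q p z) ∂q with hPqdef
  set Nq := ∫⁻ z, ENNReal.ofReal (-llr q p z) ∂q with hNqdef
  have heq : ∫⁻ a, KLdiv (κ a) p ∂ν + Nq = ∫⁻ a, KLdiv (κ a) q ∂ν + Pq := by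
    have l1 : ∫⁻ a, (KLdiv (κ a) p + Nv a) ∂ν = ∫⁻ a, KLdiv (κ a) p ∂ν + Nq := by
      rw [lintegral_add_right _ hNvm, hNvint]
    have l2 : ∫⁻ a, (KLdiv (κ a) q + Pv a) ∂ν = ∫⁻ a, KLdiv (κ a) q ∂ν + Pq := by
      rw [lintegral_add_right _ hPvm, hPvint]
    rw [← l1, ← l2]
    exact lintegral_congr_ae hkey
  have hNq_ne : Nq ≠ ⊤ := ((lintegral_ofReal_neg_llr_le hq_ac).trans_lt (by simp)).ne
  have hKq : KLdiv q p + Nq = Pq := KLdiv_add_neg_part hq_ac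
  have hfinal : ∫⁻ a, KLdiv (κ a) p ∂ν + Nq
      = ((∫⁻ a, KLdiv (κ a) q ∂ν) + KLdiv q p) + Nq := by
    rw [heq, ← hKq]
    ring
  exact WithTop.add_right_cancel hNq_ne hfinal
end

section
/- Let 𝒜 and 𝒵 be measurable spaces, let ν be a probability measure on 𝒜, let κ be a Markov kernel from 𝒜 to 𝒵, let p be a probability measure on 𝒵, and let q̄ = ν.bind κ be the mixture measure. Then both inequalities hold: (i) KL(q̄ ‖ p) ≤ ∫ KL(κ(a) ‖ p) dν(a), and (ii) ∫ KL(κ(a) ‖ q̄) dν(a) ≤ ∫ KL(κ(a) ‖ p) dν(a). -/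
open MeasureTheory ProbabilityTheory
open scoped ENNReal Classical

section Auxiliary

variable {𝒵 : Type*} [MeasurableSpace 𝒵]

lemma aux_enorm_eq (r : ℝ) : (‖r‖₊ : ℝ≥0∞) = ENNReal.ofReal r + ENNReal.ofReal (-r) := by
  rcases le_total 0 r with h | h
  · rw [← enorm_eq_nnnorm, Real.enorm_eq_ofReal h, ENNReal.ofReal_of_nonpos (neg_nonpos.mpr h), add_zero]
  · rw [← nnnorm_neg, ← enorm_eq_nnnorm, Real.enorm_eq_ofReal (neg_nonneg.mpr h),
      ENNReal.ofReal_of_nonpos h, zero_add]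

lemma aux_integrable_of_lintegral {μ : Measure 𝒵} {g : 𝒵 → ℝ} (hg : Measurable g)
    (hp : ∫⁻ x, ENNReal.ofReal (g x) ∂μ ≠ ∞) (hn : ∫⁻ x, ENNReal.ofReal (-g x) ∂μ ≠ ∞) :
    Integrable g μ := by
  refine ⟨hg.aestronglyMeasurable, ?_⟩
  have : ∫⁻ x, (‖g x‖₊ : ℝ≥0∞) ∂μ
      = ∫⁻ x, ENNReal.ofReal (g x) + ENNReal.ofReal (-g x) ∂μ :=
    lintegral_congr fun x => aux_enorm_eq (g x)
  show ∫⁻ x, (‖g x‖₊ : ℝ≥0∞) ∂μ < ∞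
  rw [this, lintegral_add_left hg.ennreal_ofReal]
  exact ENNReal.add_lt_top.mpr ⟨hp.lt_top, hn.lt_top⟩

/-- Gibbs' inequality: the Kullback–Leibler divergence between probability measures
is nonnegative. -/
lemma aux_integral_llr_nonneg (μ ρ : Measure 𝒵) [IsProbabilityMeasure μ]
    [IsProbabilityMeasure ρ] (hμρ : μ ≪ ρ) (hint : Integrable (llr μ ρ) μ) :
    0 ≤ ∫ z, llr μ ρ z ∂μ := by
  have hb_int : Integrable (fun x => (ρ.rnDeriv μ x).toReal) μ :=
    Measure.integrable_toReal_rnDeriv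
  have hb1 : ∫ x, (ρ.rnDeriv μ x).toReal ∂μ ≤ 1 := by
    calc ∫ x, (ρ.rnDeriv μ x).toReal ∂μ ≤ (ρ Set.univ).toReal := by
          rw [← setIntegral_univ]
          exact Measure.setIntegral_toReal_rnDeriv_le (measure_ne_top ρ _)
      _ = 1 := by simp
  have hae : ∀ᵐ x ∂μ, - llr μ ρ x ≤ (ρ.rnDeriv μ x).toReal - 1 := by
    filter_upwards [neg_llr hμρ, Measure.rnDeriv_pos' hμρ, Measure.rnDeriv_lt_top ρ μ]
      with x h1 h2 h3
    have hx : -llr μ ρ x = llr ρ μ x := h1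
    rw [hx, llr]
    exact Real.log_le_sub_one_of_pos (ENNReal.toReal_pos h2.ne' h3.ne)
  have hmono : ∫ x, -llr μ ρ x ∂μ ≤ ∫ x, ((ρ.rnDeriv μ x).toReal - 1) ∂μ :=
    integral_mono_ae hint.neg' (hb_int.sub (integrable_const 1)) hae
  rw [integral_neg] at hmono
  have h2 : ∫ x, ((ρ.rnDeriv μ x).toReal - 1) ∂μ
      = (∫ x, (ρ.rnDeriv μ x).toReal ∂μ) - 1 := by
    rw [integral_sub hb_int (integrable_const 1), integral_const]
    simp
  rw [h2] at hmono
  linarith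

end Auxiliary

/-- The expected pointwise posterior–prior KL dominates both the aggregated
posterior–prior KL and the mutual-information term: for a probability measure
`ν`, a Markov kernel `κ`, a probability measure `p`, and `q̄ = ν.bind κ`,
(i) `KL(q̄ ‖ p) ≤ ∫ KL(κ a ‖ p) dν` and
(ii) `∫ KL(κ a ‖ q̄) dν ≤ ∫ KL(κ a ‖ p) dν`. -/
theorem kl_mixture_inequalities
    {𝒜 𝒵 : Type*} [MeasurableSpace 𝒜] [MeasurableSpace 𝒵]
    (ν : Measure 𝒜) [IsProbabilityMeasure ν]
    (κ : Kernel 𝒜 𝒵) [IsMarkovKernel κ]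
    (p : Measure 𝒵) [IsProbabilityMeasure p] :
    KLdiv (ν.bind κ) p ≤ ∫⁻ a, KLdiv (κ a) p ∂ν
      ∧ ∫⁻ a, KLdiv (κ a) (ν.bind κ) ∂ν ≤ ∫⁻ a, KLdiv (κ a) p ∂ν := by
  classical
  set q : Measure 𝒵 := ν.bind κ with hq_def
  have hκmeas : Measurable fun a => (κ a : Measure 𝒵) := κ.measurable
  have hbind : ∀ {N : Set 𝒵}, MeasurableSet N → q N = ∫⁻ a, κ a N ∂ν :=
    fun hN => Measure.bind_apply hN hκmeas.aemeasurable
  haveI hqprob : IsProbabilityMeasure q := ⟨by rw [hbind MeasurableSet.univ]; simp⟩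
  have hlint : ∀ {g : 𝒵 → ℝ≥0∞}, Measurable g →
      ∫⁻ z, g z ∂q = ∫⁻ a, ∫⁻ z, g z ∂κ a ∂ν :=
    fun hg => Measure.lintegral_bind hκmeas.aemeasurable hg.aemeasurable
  by_cases hR : ∫⁻ a, KLdiv (κ a) p ∂ν = ⊤
  · rw [hR]
    exact ⟨le_top, le_top⟩
  -- `KLdiv (κ a) p = ⊤` when the defining condition fails
  have hH_top : ∀ a, ¬(κ a ≪ p ∧ Integrable (llr (κ a) p) (κ a)) → KLdiv (κ a) p = ⊤ :=
    fun a ha => if_neg ha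
  -- Step 1 : the mixture is absolutely continuous w.r.t. `p`.
  have hqp : q ≪ p := by
    refine Measure.AbsolutelyContinuous.mk fun N hN hpN => ?_
    have hA : MeasurableSet {a | κ a N ≠ 0} :=
      (κ.measurable_coe hN (measurableSet_singleton 0)).compl
    have hAnull : ν {a | κ a N ≠ 0} = 0 := by
      by_contra h0
      have hle : ∞ * ν {a | κ a N ≠ 0} ≤ ∫⁻ a, KLdiv (κ a) p ∂ν := by
        rw [← lintegral_indicator_const hA (∞ : ℝ≥0∞)]
        refine lintegral_mono fun a => ?_
        by_cases ha : a ∈ {a | κ a N ≠ 0}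
        · rw [Set.indicator_of_mem ha, hH_top a]
          rintro ⟨hac, -⟩
          exact ha (hac hpN)
        · rw [Set.indicator_of_notMem ha]
          exact zero_le
      rw [ENNReal.top_mul h0] at hle
      exact hR (top_le_iff.mp hle)
    rw [hbind hN, lintegral_eq_zero_iff (κ.measurable_coe hN)]
    exact (ae_iff.mpr (by simpa using hAnull))
  -- The set where the density of `q` w.r.t. `p` vanishes
  set S : Set 𝒵 := {z | q.rnDeriv p z = 0} with hS_def
  have hS : MeasurableSet S := Measure.measurable_rnDeriv q p (measurableSet_singleton 0)
  have hqS : q S = 0 := by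
    rw [← Measure.setLIntegral_rnDeriv hqp]
    rw [setLIntegral_congr_fun hS (fun z hz => hz)]
    simp
  have hE1 : ∀ᵐ a ∂ν, κ a S = 0 := by
    have h0 : ∫⁻ a, κ a S ∂ν = 0 := by rw [← hbind hS]; exact hqS
    have := (lintegral_eq_zero_iff (κ.measurable_coe hS)).mp h0
    filter_upwards [this] with a ha using ha
  have hE2 : ∀ᵐ a ∂ν, ∫⁻ z, p.rnDeriv q z ∂κ a < ∞ := by
    refine ae_lt_top (Measurable.lintegral_kernel (Measure.measurable_rnDeriv p q)) ?_
    rw [← hlint (Measure.measurable_rnDeriv p q)]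
    exact (Measure.lintegral_rnDeriv_le.trans_lt (by simp)).ne
  have hh_meas : Measurable (llr q p) := measurable_llr _ _
  -- pointwise bound on the negative part of `llr q p`
  have hneg_bound : ∀ᵐ z ∂q, ENNReal.ofReal (- llr q p z) ≤ p.rnDeriv q z := by
    filter_upwards [exp_neg_llr hqp] with z hz
    calc ENNReal.ofReal (- llr q p z) ≤ ENNReal.ofReal (Real.exp (- llr q p z)) :=
          ENNReal.ofReal_le_ofReal (by linarith [Real.add_one_le_exp (- llr q p z)])
      _ = ENNReal.ofReal ((p.rnDeriv q z).toReal) := by rw [hz]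
      _ ≤ p.rnDeriv q z := ENNReal.ofReal_toReal_le
  set P : 𝒜 → ℝ≥0∞ := fun a => ∫⁻ z, ENNReal.ofReal (llr q p z) ∂κ a with hP_def
  set M : 𝒜 → ℝ≥0∞ := fun a => ∫⁻ z, ENNReal.ofReal (- llr q p z) ∂κ a with hM_def
  have hP_meas : Measurable P := Measurable.lintegral_kernel hh_meas.ennreal_ofReal
  have hM_meas : Measurable M := Measurable.lintegral_kernel hh_meas.neg.ennreal_ofReal
  have hPtot : ∫⁻ a, P a ∂ν = ∫⁻ z, ENNReal.ofReal (llr q p z) ∂q :=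
    (hlint hh_meas.ennreal_ofReal).symm
  have hMtot : ∫⁻ a, M a ∂ν = ∫⁻ z, ENNReal.ofReal (- llr q p z) ∂q :=
    (hlint hh_meas.neg.ennreal_ofReal).symm
  have hM_fin : ∫⁻ a, M a ∂ν ≤ 1 := by
    rw [hMtot]
    calc ∫⁻ z, ENNReal.ofReal (- llr q p z) ∂q ≤ ∫⁻ z, p.rnDeriv q z ∂q :=
          lintegral_mono_ae hneg_bound
      _ ≤ p Set.univ := Measure.lintegral_rnDeriv_le
      _ = 1 := measure_univ
  have hM_ne : ∫⁻ a, M a ∂ν ≠ ∞ := (hM_fin.trans_lt ENNReal.one_lt_top).ne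
  -- KEY pointwise statement
  have key : ∀ᵐ a ∂ν, KLdiv (κ a) q + P a ≤ KLdiv (κ a) p + M a
      ∧ P a ≤ KLdiv (κ a) p + 2 := by
    filter_upwards [hE1, hE2] with a ha1 ha2
    by_cases hcond : κ a ≪ p ∧ Integrable (llr (κ a) p) (κ a)
    swap
    · rw [hH_top a hcond]
      constructor
      · simp
      · simp
    obtain ⟨hap, hint⟩ := hcond
    -- κ a ≪ q
    have haq : κ a ≪ q := by
      refine Measure.AbsolutelyContinuous.mk fun N hN hqN => ?_
      have h1 : ∀ᵐ z ∂p, z ∈ N → q.rnDeriv p z = 0 := by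
        have hset := Measure.setLIntegral_rnDeriv hqp N
        rw [hqN] at hset
        exact (setLIntegral_eq_zero_iff hN (Measure.measurable_rnDeriv q p)).mp hset
      have hpN2 : p (N ∩ Sᶜ) = 0 := by
        refine measure_mono_null ?_ (ae_iff.mp h1)
        intro z hz
        simp only [Set.mem_setOf_eq]
        intro hcontra
        exact hz.2 (hcontra hz.1)
      have h2 : κ a (N ∩ Sᶜ) = 0 := hap hpN2
      refine measure_mono_null (fun z hz => ?_) (measure_union_null h2 ha1)
      by_cases hzS : z ∈ S
      · exact Or.inr hzS
      · exact Or.inl ⟨hz, hzS⟩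
    -- decomposition of the log-likelihood ratio
    have hreg : ∀ᵐ z ∂(κ a), llr (κ a) p z = llr (κ a) q z + llr q p z := by
      filter_upwards [hap.ae_le (Measure.rnDeriv_mul_rnDeriv haq),
        Measure.rnDeriv_pos haq, haq.ae_le (Measure.rnDeriv_lt_top (κ a) q),
        haq.ae_le (Measure.rnDeriv_pos hqp), hap.ae_le (Measure.rnDeriv_lt_top q p)]
        with z h1 h2 h3 h4 h5
      have e1 : ((κ a).rnDeriv q z).toReal ≠ 0 := (ENNReal.toReal_pos h2.ne' h3.ne).ne'
      have e2 : (q.rnDeriv p z).toReal ≠ 0 := (ENNReal.toReal_pos h4.ne' h5.ne).ne'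
      have h1' : ((κ a).rnDeriv q * q.rnDeriv p) z = (κ a).rnDeriv p z := h1
      simp only [llr]
      rw [← h1', Pi.mul_apply, ENNReal.toReal_mul, Real.log_mul e1 e2]
    -- finiteness of the positive part of `llr (κ a) p`
    have hYpos : ∫⁻ z, ENNReal.ofReal (llr (κ a) p z) ∂κ a ≠ ∞ := by
      refine ne_top_of_le_ne_top hint.2.ne (lintegral_mono fun z => ?_)
      exact Real.ofReal_le_enorm _
    -- bound on the negative part of `llr (κ a) p`
    have hYneg : ∫⁻ z, ENNReal.ofReal (- llr (κ a) p z) ∂κ a ≤ 1 := by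
      have hb : ∀ᵐ z ∂κ a, ENNReal.ofReal (- llr (κ a) p z) ≤ p.rnDeriv (κ a) z := by
        filter_upwards [exp_neg_llr hap] with z hz
        calc ENNReal.ofReal (- llr (κ a) p z)
            ≤ ENNReal.ofReal (Real.exp (- llr (κ a) p z)) :=
              ENNReal.ofReal_le_ofReal (by linarith [Real.add_one_le_exp (- llr (κ a) p z)])
          _ = ENNReal.ofReal ((p.rnDeriv (κ a) z).toReal) := by rw [hz]
          _ ≤ p.rnDeriv (κ a) z := ENNReal.ofReal_toReal_le
      calc ∫⁻ z, ENNReal.ofReal (- llr (κ a) p z) ∂κ a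
          ≤ ∫⁻ z, p.rnDeriv (κ a) z ∂κ a := lintegral_mono_ae hb
        _ ≤ p Set.univ := Measure.lintegral_rnDeriv_le
        _ = 1 := measure_univ
    -- bound on the negative part of `llr (κ a) q`
    have hXneg : ∫⁻ z, ENNReal.ofReal (- llr (κ a) q z) ∂κ a ≤ 1 := by
      have hb : ∀ᵐ z ∂κ a, ENNReal.ofReal (- llr (κ a) q z) ≤ q.rnDeriv (κ a) z := by
        filter_upwards [exp_neg_llr haq] with z hz
        calc ENNReal.ofReal (- llr (κ a) q z)
            ≤ ENNReal.ofReal (Real.exp (- llr (κ a) q z)) :=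
              ENNReal.ofReal_le_ofReal (by linarith [Real.add_one_le_exp (- llr (κ a) q z)])
          _ = ENNReal.ofReal ((q.rnDeriv (κ a) z).toReal) := by rw [hz]
          _ ≤ q.rnDeriv (κ a) z := ENNReal.ofReal_toReal_le
      calc ∫⁻ z, ENNReal.ofReal (- llr (κ a) q z) ∂κ a
          ≤ ∫⁻ z, q.rnDeriv (κ a) z ∂κ a := lintegral_mono_ae hb
        _ ≤ q Set.univ := Measure.lintegral_rnDeriv_le
        _ = 1 := measure_univ
    -- M a is finite
    have hMa : M a ≠ ∞ :=
      ne_top_of_le_ne_top ha2.ne (lintegral_mono_ae (haq.ae_le hneg_bound))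
    -- positive part of `llr (κ a) q` is finite
    have hXpos : ∫⁻ z, ENNReal.ofReal (llr (κ a) q z) ∂κ a ≠ ∞ := by
      have hb : ∀ᵐ z ∂κ a, ENNReal.ofReal (llr (κ a) q z)
          ≤ ENNReal.ofReal (llr (κ a) p z) + ENNReal.ofReal (- llr q p z) := by
        filter_upwards [hreg] with z hz
        have heq : llr (κ a) q z = llr (κ a) p z + (- llr q p z) := by linarith
        rw [heq]
        exact ENNReal.ofReal_add_le
      refine ne_top_of_le_ne_top ?_ (lintegral_mono_ae hb)
      rw [lintegral_add_left (measurable_llr _ _).ennreal_ofReal]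
      exact ENNReal.add_ne_top.mpr ⟨hYpos, hMa⟩
    -- positive part of `llr q p` under `κ a`
    have hPle : P a ≤ ∫⁻ z, ENNReal.ofReal (llr (κ a) p z) ∂κ a
        + ∫⁻ z, ENNReal.ofReal (- llr (κ a) q z) ∂κ a := by
      have hb : ∀ᵐ z ∂κ a, ENNReal.ofReal (llr q p z)
          ≤ ENNReal.ofReal (llr (κ a) p z) + ENNReal.ofReal (- llr (κ a) q z) := by
        filter_upwards [hreg] with z hz
        have heq : llr q p z = llr (κ a) p z + (- llr (κ a) q z) := by linarith
        rw [heq]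
        exact ENNReal.ofReal_add_le
      calc P a ≤ ∫⁻ z, ENNReal.ofReal (llr (κ a) p z)
            + ENNReal.ofReal (- llr (κ a) q z) ∂κ a := lintegral_mono_ae hb
        _ = _ := lintegral_add_left (measurable_llr _ _).ennreal_ofReal _
    have hPa : P a ≠ ∞ :=
      ne_top_of_le_ne_top
        (ENNReal.add_ne_top.mpr ⟨hYpos, (hXneg.trans_lt ENNReal.one_lt_top).ne⟩) hPle
    -- integrabilities
    have hX_int : Integrable (llr (κ a) q) (κ a) :=
      aux_integrable_of_lintegral (measurable_llr _ _) hXpos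
        (hXneg.trans_lt ENNReal.one_lt_top).ne
    have hh_int : Integrable (llr q p) (κ a) :=
      aux_integrable_of_lintegral hh_meas hPa hMa
    -- the chain-rule identity for the integrals
    have hsum : ∫ z, llr (κ a) p z ∂κ a
        = ∫ z, llr (κ a) q z ∂κ a + ∫ z, llr q p z ∂κ a := by
      rw [← integral_add hX_int hh_int]
      exact integral_congr_ae hreg
    have hGeq : ∫ z, llr q p z ∂κ a = (P a).toReal - (M a).toReal :=
      integral_eq_lintegral_pos_part_sub_lintegral_neg_part hh_int
    have hX0 : 0 ≤ ∫ z, llr (κ a) q z ∂κ a := aux_integral_llr_nonneg _ _ haq hX_int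
    have hY0 : 0 ≤ ∫ z, llr (κ a) p z ∂κ a := aux_integral_llr_nonneg _ _ hap hint
    have hKq : KLdiv (κ a) q = ENNReal.ofReal (∫ z, llr (κ a) q z ∂κ a) :=
      if_pos ⟨haq, hX_int⟩
    have hKp : KLdiv (κ a) p = ENNReal.ofReal (∫ z, llr (κ a) p z ∂κ a) :=
      if_pos ⟨hap, hint⟩
    constructor
    · -- first part : KL(κ a ‖ q) + P a ≤ KL(κ a ‖ p) + M a
      rw [hKq, hKp, ← ENNReal.ofReal_toReal hPa, ← ENNReal.ofReal_toReal hMa,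
        ← ENNReal.ofReal_add hX0 ENNReal.toReal_nonneg,
        ← ENNReal.ofReal_add hY0 ENNReal.toReal_nonneg]
      exact ENNReal.ofReal_le_ofReal (by linarith)
    · -- second part : P a ≤ KL(κ a ‖ p) + 2
      have hYeq : ∫ z, llr (κ a) p z ∂κ a
          = (∫⁻ z, ENNReal.ofReal (llr (κ a) p z) ∂κ a).toReal
            - (∫⁻ z, ENNReal.ofReal (- llr (κ a) p z) ∂κ a).toReal :=
        integral_eq_lintegral_pos_part_sub_lintegral_neg_part hint
      have hYneg_ne : ∫⁻ z, ENNReal.ofReal (- llr (κ a) p z) ∂κ a ≠ ∞ :=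
        (hYneg.trans_lt ENNReal.one_lt_top).ne
      have hstep : ∫⁻ z, ENNReal.ofReal (llr (κ a) p z) ∂κ a
          ≤ ENNReal.ofReal (∫ z, llr (κ a) p z ∂κ a) + 1 := by
        calc ∫⁻ z, ENNReal.ofReal (llr (κ a) p z) ∂κ a
            = ENNReal.ofReal ((∫⁻ z, ENNReal.ofReal (llr (κ a) p z) ∂κ a).toReal) :=
              (ENNReal.ofReal_toReal hYpos).symm
          _ = ENNReal.ofReal ((∫ z, llr (κ a) p z ∂κ a)
              + (∫⁻ z, ENNReal.ofReal (- llr (κ a) p z) ∂κ a).toReal) := by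
              congr 1
              rw [hYeq]
              ring
          _ ≤ ENNReal.ofReal (∫ z, llr (κ a) p z ∂κ a)
              + ENNReal.ofReal ((∫⁻ z, ENNReal.ofReal (- llr (κ a) p z) ∂κ a).toReal) :=
              ENNReal.ofReal_add_le
          _ ≤ ENNReal.ofReal (∫ z, llr (κ a) p z ∂κ a)
              + ∫⁻ z, ENNReal.ofReal (- llr (κ a) p z) ∂κ a := by
              gcongr
              exact ENNReal.ofReal_toReal_le
          _ ≤ ENNReal.ofReal (∫ z, llr (κ a) p z ∂κ a) + 1 := by gcongr
      rw [hKp]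
      calc P a ≤ ∫⁻ z, ENNReal.ofReal (llr (κ a) p z) ∂κ a
            + ∫⁻ z, ENNReal.ofReal (- llr (κ a) q z) ∂κ a := hPle
        _ ≤ (ENNReal.ofReal (∫ z, llr (κ a) p z ∂κ a) + 1) + 1 := by
            gcongr
        _ = ENNReal.ofReal (∫ z, llr (κ a) p z ∂κ a) + 2 := by
            rw [add_assoc]
            norm_num
  have key1 : ∀ᵐ a ∂ν, KLdiv (κ a) q + P a ≤ KLdiv (κ a) p + M a :=
    key.mono fun a h => h.1
  have key2 : ∀ᵐ a ∂ν, P a ≤ KLdiv (κ a) p + 2 := key.mono fun a h => h.2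
  have hPfin : ∫⁻ a, P a ∂ν ≠ ∞ := by
    refine ne_top_of_le_ne_top ?_ (lintegral_mono_ae key2)
    rw [lintegral_add_right' _ aemeasurable_const, lintegral_const]
    refine ENNReal.add_ne_top.mpr ⟨hR, ?_⟩
    simp
  have hmain : ∫⁻ a, KLdiv (κ a) q ∂ν + ∫⁻ a, P a ∂ν
      ≤ ∫⁻ a, KLdiv (κ a) p ∂ν + ∫⁻ a, M a ∂ν := by
    calc ∫⁻ a, KLdiv (κ a) q ∂ν + ∫⁻ a, P a ∂ν
        ≤ ∫⁻ a, KLdiv (κ a) q + P a ∂ν := le_lintegral_add _ _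
      _ ≤ ∫⁻ a, KLdiv (κ a) p + M a ∂ν := lintegral_mono_ae key1
      _ = _ := lintegral_add_right' _ hM_meas.aemeasurable
  have hIq : Integrable (llr q p) q := by
    refine aux_integrable_of_lintegral hh_meas ?_ ?_
    · rw [← hPtot]; exact hPfin
    · rw [← hMtot]; exact hM_ne
  have hq0 : 0 ≤ ∫ z, llr q p z ∂q := aux_integral_llr_nonneg q p hqp hIq
  have hqeq : ∫ z, llr q p z ∂q = (∫⁻ a, P a ∂ν).toReal - (∫⁻ a, M a ∂ν).toReal := by
    rw [hPtot, hMtot]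
    exact integral_eq_lintegral_pos_part_sub_lintegral_neg_part hIq
  have hMP : ∫⁻ a, M a ∂ν ≤ ∫⁻ a, P a ∂ν := by
    rw [← ENNReal.ofReal_toReal hM_ne, ← ENNReal.ofReal_toReal hPfin]
    exact ENNReal.ofReal_le_ofReal (by linarith)
  constructor
  · -- inequality (i)
    have hKqp : KLdiv q p = ENNReal.ofReal (∫ z, llr q p z ∂q) := if_pos ⟨hqp, hIq⟩
    rw [hKqp, hqeq]
    have hPR : ∫⁻ a, P a ∂ν ≤ ∫⁻ a, KLdiv (κ a) p ∂ν + ∫⁻ a, M a ∂ν :=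
      le_trans (le_add_self) hmain
    have htr : (∫⁻ a, P a ∂ν).toReal
        ≤ (∫⁻ a, KLdiv (κ a) p ∂ν).toReal + (∫⁻ a, M a ∂ν).toReal := by
      have h1 := ENNReal.toReal_mono (ENNReal.add_ne_top.mpr ⟨hR, hM_ne⟩) hPR
      rwa [ENNReal.toReal_add hR hM_ne] at h1
    calc ENNReal.ofReal ((∫⁻ a, P a ∂ν).toReal - (∫⁻ a, M a ∂ν).toReal)
        ≤ ENNReal.ofReal ((∫⁻ a, KLdiv (κ a) p ∂ν).toReal) :=
          ENNReal.ofReal_le_ofReal (by linarith)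
      _ = ∫⁻ a, KLdiv (κ a) p ∂ν := ENNReal.ofReal_toReal hR
  · -- inequality (ii)
    have hfinal : ∫⁻ a, KLdiv (κ a) q ∂ν + ∫⁻ a, P a ∂ν
        ≤ ∫⁻ a, KLdiv (κ a) p ∂ν + ∫⁻ a, P a ∂ν :=
      hmain.trans (by gcongr)
    exact (ENNReal.add_le_add_iff_right hPfin).mp hfinal
end

section
/- (Disjoint latent supports yield an exact mode classifier.) Let (Ω, ℙ) be a probability space, let F be a nonempty finite type, let M : Ω → F be a measurable random variable, let 𝒵 be a measurable space, and let Z : Ω → 𝒵 be measurable. Suppose (E_k)_{k ∈ F} is a family of measurable, pairwise disjoint subsets of 𝒵 such that ℙ({Z ∈ E_k} ∩ {M = k}) = ℙ(M = k) for every k ∈ F. Then there exists a measurable function h : 𝒵 → F with ℙ(h(Z) = M) = 1. -/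
open MeasureTheory

open Classical in
/-- Classifier built from a list of labels. -/
noncomputable def classifierList {𝒵 F : Type*} (E : F → Set 𝒵) (d : F) :
    List F → 𝒵 → F
  | [], _ => d
  | (k :: l), z => if z ∈ E k then k else classifierList E d l z

lemma classifierList_measurable {𝒵 F : Type*} [MeasurableSpace 𝒵]
    [MeasurableSpace F] [MeasurableSingletonClass F]
    (E : F → Set 𝒵) (hEmeas : ∀ k, MeasurableSet (E k)) (d : F) :
    ∀ l : List F, Measurable (classifierList E d l) := by
  intro l
  induction l with
  | nil => exact measurable_const
  | cons k l ih =>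
    simpa [classifierList] using Measurable.ite (p := fun z => z ∈ E k) (hEmeas k) measurable_const ih

lemma classifierList_eq {𝒵 F : Type*} (E : F → Set 𝒵) (d : F)
    (hdisj : Pairwise (Function.onFun Disjoint E)) :
    ∀ (l : List F) (k : F), k ∈ l → ∀ z ∈ E k, classifierList E d l z = k := by
  intro l
  induction l with
  | nil => intro k hk; simp at hk
  | cons j l ih =>
    intro k hk z hz
    rcases List.mem_cons.mp hk with rfl | hk
    · simp [classifierList, hz]
    · by_cases hj : z ∈ E j
      · have : j = k := by
          by_contra hne
          exact Set.disjoint_left.mp (hdisj hne) hj hz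
        subst this
        simp [classifierList, hj]
      · simp only [classifierList, if_neg hj]
        exact ih k hk z hz

/-- **Disjoint latent supports yield an exact mode classifier**
(Proposition 2, second part): if, conditionally on `M = k`, the latent `Z` lies
almost surely in a measurable set `E k`, and the sets `E k` are pairwise
disjoint, then there is a measurable classifier `h` with `ℙ(h(Z) = M) = 1`. -/
theorem exact_mode_classifier_of_disjoint_supports
    {Ω : Type*} [MeasurableSpace Ω] (P : Measure Ω) [IsProbabilityMeasure P]
    {F : Type*} [Fintype F] [Nonempty F]
    [MeasurableSpace F] [MeasurableSingletonClass F]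
    (M : Ω → F) (hM : Measurable M)
    {𝒵 : Type*} [MeasurableSpace 𝒵] (Z : Ω → 𝒵) (hZ : Measurable Z)
    (E : F → Set 𝒵) (hEmeas : ∀ k, MeasurableSet (E k))
    (hdisj : Pairwise (Function.onFun Disjoint E))
    (hcond : ∀ k : F, P ({ω | Z ω ∈ E k} ∩ {ω | M ω = k}) = P {ω | M ω = k}) :
    ∃ h : 𝒵 → F, Measurable h ∧ P {ω | h (Z ω) = M ω} = 1 := by
  classical
  set h : 𝒵 → F := classifierList E (Classical.arbitrary F) Finset.univ.toList
  have hmeas : Measurable h := classifierList_measurable E hEmeas _ _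
  have hcorrect : ∀ k : F, ∀ z ∈ E k, h z = k := fun k z hz =>
    classifierList_eq E _ hdisj _ k (by simp) z hz
  refine ⟨h, hmeas, ?_⟩
  -- each bad set is null
  have hnull : ∀ k : F, P ({ω | M ω = k} \ {ω | Z ω ∈ E k}) = 0 := by
    intro k
    have hA : MeasurableSet ({ω | Z ω ∈ E k} ∩ {ω | M ω = k}) :=
      (hZ (hEmeas k)).inter (hM (measurableSet_singleton k))
    have hsub : ({ω | Z ω ∈ E k} ∩ {ω | M ω = k}) ⊆ {ω | M ω = k} :=
      Set.inter_subset_right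
    have hdiff : {ω | M ω = k} \ ({ω | Z ω ∈ E k} ∩ {ω | M ω = k})
        = {ω | M ω = k} \ {ω | Z ω ∈ E k} := by
      ext ω; simp only [Set.mem_diff, Set.mem_inter_iff, Set.mem_setOf_eq]; tauto
    have := measure_diff hsub hA.nullMeasurableSet (measure_ne_top P _)
    rw [hdiff, hcond k] at this
    simpa using this
  have hBad : P ({ω | h (Z ω) = M ω}ᶜ) = 0 := by
    have hsub : {ω | h (Z ω) = M ω}ᶜ ⊆ ⋃ k, ({ω | M ω = k} \ {ω | Z ω ∈ E k}) := by
      intro ω hω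
      simp only [Set.mem_compl_iff, Set.mem_setOf_eq] at hω
      refine Set.mem_iUnion.mpr ⟨M ω, ?_⟩
      refine ⟨rfl, fun hz => hω ?_⟩
      exact hcorrect (M ω) (Z ω) hz
    exact measure_mono_null hsub (measure_iUnion_null fun k => hnull k)
  have hmeasS : MeasurableSet {ω | h (Z ω) = M ω} :=
    measurableSet_eq_fun (hmeas.comp hZ) hM
  exact (prob_compl_eq_zero_iff hmeasS).mp hBad
end
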